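/- arXiv:1803.02712 — 4 statements merged into one kernel-verified Lean document; each statement's English description precedes it below -/
import Mathlib

section
/- Let I = ℝ or I = (0,∞), let F : ℝ² → ℝ be C², positively homogeneous of degree p > 2, with F > 0 away from the origin. Let (u,v) be a bounded C² solution of −u'' = ∂_u F(u,v), −v'' = ∂_v F(u,v) on I with (u,v) not identically (0,0). Then there exist ε, δ > 0 and a sequence (r_n) in I with r_n → ∞ such that ∫_{r_n−ε}^{r_n+ε} (|u|^p + |v|^p) dt ≥ δ for every n. -/
/-!
Along a solution `w = (u, v)` the energy `|w'|² / 2 + F(w)` is a positive constant `e`, so `w'`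
is bounded, and hence so is the virial `⟪w, w'⟫ = u u' + v v'`. By Euler's identity
`⟪w, ∇F(w)⟫ = p F(w)`, the virial has derivative `|w'|² - p F(w) = 2e - (p + 2) F(w)`.
Integrating over a window of length `2ε`, the bounded boundary terms are beaten by `4εe`
once `ε` is large, which forces `∫ F(w) ≥ 2e / (p + 2)` on every such window; finally
homogeneity gives `F(w) ≤ K (|u|^p + |v|^p)`.
-/

open Set Filter MeasureTheory

section Homogeneous

variable {E : Type*} [NormedAddCommGroup E] [NormedSpace ℝ E] {p : ℝ} {F : E → ℝ}

theorem map_zero_of_homogeneous (hhom : ∀ t : ℝ, 0 < t → ∀ z : E, F (t • z) = t ^ p * F z)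
    (hp : p ≠ 0) : F 0 = 0 := by
  have h := hhom 2 two_pos 0
  rw [smul_zero] at h
  have h2 : (2 : ℝ) ^ p ≠ 1 := by
    rw [← Real.rpow_zero 2, Ne, Real.rpow_right_inj two_pos (by norm_num)]
    exact hp
  by_contra h0
  exact h2 (mul_right_cancel₀ h0 (h.symm.trans (one_mul (F 0)).symm))

theorem fderiv_apply_self_of_homogeneous
    (hhom : ∀ t : ℝ, 0 < t → ∀ z : E, F (t • z) = t ^ p * F z) {z : E}
    (hF : DifferentiableAt ℝ F z) : fderiv ℝ F z z = p * F z := by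
  have hline : HasDerivAt (fun t : ℝ => t • z) z 1 := by
    simpa using (hasDerivAt_id (1 : ℝ)).smul_const z
  have hcomp : HasDerivAt (fun t : ℝ => F (t • z)) (fderiv ℝ F z z) 1 :=
    hF.hasFDerivAt.comp_hasDerivAt_of_eq 1 hline (one_smul ℝ z).symm
  have hpow : HasDerivAt (fun t : ℝ => t ^ p * F z) (p * F z) 1 := by
    simpa using
      (Real.hasDerivAt_rpow_const (x := 1) (p := p) (Or.inl one_ne_zero)).mul_const (F z)
  have heq : (fun t : ℝ => F (t • z)) =ᶠ[nhds 1] fun t => t ^ p * F z := by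
    filter_upwards [eventually_gt_nhds one_pos] with t ht using hhom t ht z
  exact hcomp.unique (hpow.congr_of_eventuallyEq heq)

theorem exists_le_mul_norm_rpow_of_homogeneous [ProperSpace E] (hF : Continuous F)
    (hhom : ∀ t : ℝ, 0 < t → ∀ z : E, F (t • z) = t ^ p * F z) (hp : 0 < p) :
    ∃ K > 0, ∀ z, F z ≤ K * ‖z‖ ^ p := by
  obtain ⟨w, -, hw⟩ := (isCompact_closedBall (0 : E) 1).exists_isMaxOn
    (Metric.nonempty_closedBall.2 zero_le_one) hF.continuousOn
  refine ⟨max (F w) 1, lt_max_of_lt_right one_pos, fun z => ?_⟩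
  rcases eq_or_ne z 0 with rfl | hz
  · simp [map_zero_of_homogeneous hhom hp.ne', Real.zero_rpow hp.ne']
  have hnz : 0 < ‖z‖ := norm_pos_iff.2 hz
  have hunit : ‖z‖⁻¹ • z ∈ Metric.closedBall (0 : E) 1 :=
    mem_closedBall_zero_iff.2 (norm_smul_inv_norm hz).le
  calc F z = ‖z‖ ^ p * F (‖z‖⁻¹ • z) := by
        rw [← hhom _ hnz, smul_inv_smul₀ hnz.ne']
    _ ≤ ‖z‖ ^ p * max (F w) 1 := by gcongr; exact (hw hunit).trans (le_max_left _ _)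
    _ = max (F w) 1 * ‖z‖ ^ p := mul_comm _ _

end Homogeneous

theorem Prod.rpow_norm_le_add {E F : Type*}
    [SeminormedAddCommGroup E] [SeminormedAddCommGroup F]
    (z : E × F) {p : ℝ} (hp : 0 ≤ p) : ‖z‖ ^ p ≤ ‖z.1‖ ^ p + ‖z.2‖ ^ p := by
  rw [Prod.norm_def, Real.rpow_max (norm_nonneg _) (norm_nonneg _) hp]
  exact max_le (le_add_of_nonneg_right (by positivity)) (le_add_of_nonneg_left (by positivity))

theorem ContinuousLinearMap.apply_prod_eq_smul_add_smul {𝕜 M : Type*}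
    [NontriviallyNormedField 𝕜] [NormedAddCommGroup M] [NormedSpace 𝕜 M]
    (L : 𝕜 × 𝕜 →L[𝕜] M) (a b : 𝕜) :
    L (a, b) = a • L (1, 0) + b • L (0, 1) := by
  rw [← map_smul, ← map_smul, ← map_add]
  simp

theorem sub_two_mul_le_integral_of_hasDerivAt {G f : ℝ → ℝ} {a b c M : ℝ} (hab : a ≤ b)
    (hG : ∀ t ∈ Icc a b, HasDerivAt G (c - f t) t) (hf : IntervalIntegrable f volume a b)
    (ha : |G a| ≤ M) (hb : |G b| ≤ M) : (b - a) * c - 2 * M ≤ ∫ t in a..b, f t := by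
  have hftc := intervalIntegral.integral_eq_sub_of_hasDerivAt (uIcc_of_le hab ▸ hG)
    (intervalIntegrable_const.sub hf)
  rw [intervalIntegral.integral_sub intervalIntegrable_const hf, intervalIntegral.integral_const,
    smul_eq_mul] at hftc
  linarith [abs_le.1 ha, abs_le.1 hb]

section Solution

variable {F : ℝ × ℝ → ℝ} {u v u' v' u'' v'' : ℝ → ℝ} {t : ℝ}

theorem hasDerivAt_energy (hF : DifferentiableAt ℝ F (u t, v t))
    (hu : HasDerivAt u (u' t) t) (hu' : HasDerivAt u' (u'' t) t)
    (hv : HasDerivAt v (v' t) t) (hv' : HasDerivAt v' (v'' t) t)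
    (hequ : -u'' t = fderiv ℝ F (u t, v t) (1, 0))
    (heqv : -v'' t = fderiv ℝ F (u t, v t) (0, 1)) :
    HasDerivAt (fun s => u' s ^ 2 / 2 + v' s ^ 2 / 2 + F (u s, v s)) 0 t := by
  have hFuv := hF.hasFDerivAt.comp_hasDerivAt t (hu.prodMk hv)
  refine (((hu'.pow 2).div_const 2).add ((hv'.pow 2).div_const 2)
    |>.add hFuv).congr_deriv ?_
  rw [ContinuousLinearMap.apply_prod_eq_smul_add_smul, ← hequ, ← heqv]
  simp only [smul_eq_mul]
  push_cast
  ring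

theorem hasDerivAt_virial {p : ℝ} (hhom : ∀ s : ℝ, 0 < s → ∀ z, F (s • z) = s ^ p * F z)
    (hF : DifferentiableAt ℝ F (u t, v t))
    (hu : HasDerivAt u (u' t) t) (hu' : HasDerivAt u' (u'' t) t)
    (hv : HasDerivAt v (v' t) t) (hv' : HasDerivAt v' (v'' t) t)
    (hequ : -u'' t = fderiv ℝ F (u t, v t) (1, 0))
    (heqv : -v'' t = fderiv ℝ F (u t, v t) (0, 1)) :
    HasDerivAt (fun s => u s * u' s + v s * v' s) (u' t ^ 2 + v' t ^ 2 - p * F (u t, v t)) t := by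
  have heuler := fderiv_apply_self_of_homogeneous hhom hF
  rw [ContinuousLinearMap.apply_prod_eq_smul_add_smul, ← hequ, ← heqv] at heuler
  refine ((hu.mul hu').add (hv.mul hv')).congr_deriv ?_
  simp only [smul_eq_mul] at heuler
  linear_combination -heuler

theorem exists_pos_energy_eq {I : Set ℝ} (hIo : IsOpen I) (hIc : IsPreconnected I)
    (hF : Differentiable ℝ F) (hpos : ∀ z : ℝ × ℝ, z ≠ 0 → 0 < F z)
    (hu : ∀ t ∈ I, HasDerivAt u (u' t) t) (hu' : ∀ t ∈ I, HasDerivAt u' (u'' t) t)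
    (hv : ∀ t ∈ I, HasDerivAt v (v' t) t) (hv' : ∀ t ∈ I, HasDerivAt v' (v'' t) t)
    (hequ : ∀ t ∈ I, -u'' t = fderiv ℝ F (u t, v t) (1, 0))
    (heqv : ∀ t ∈ I, -v'' t = fderiv ℝ F (u t, v t) (0, 1))
    (hnt : ∃ t ∈ I, (u t, v t) ≠ (0, 0)) :
    ∃ e > 0, ∀ t ∈ I, u' t ^ 2 / 2 + v' t ^ 2 / 2 + F (u t, v t) = e := by
  obtain ⟨t₀, ht₀, hne⟩ := hnt
  have hE : ∀ t ∈ I, HasDerivAt (fun s => u' s ^ 2 / 2 + v' s ^ 2 / 2 + F (u s, v s)) 0 t :=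
    fun t ht => hasDerivAt_energy (hF _) (hu t ht) (hu' t ht) (hv t ht) (hv' t ht)
      (hequ t ht) (heqv t ht)
  refine ⟨_, add_pos_of_nonneg_of_pos (by positivity) (hpos _ hne), fun t ht =>
    hIo.is_const_of_deriv_eq_zero hIc
      (fun s hs => (hE s hs).differentiableAt.differentiableWithinAt)
      (fun s hs => (hE s hs).deriv) ht ht₀⟩

theorem abs_virial_le {e C : ℝ} (hF : 0 ≤ F (u t, v t))
    (hE : u' t ^ 2 / 2 + v' t ^ 2 / 2 + F (u t, v t) = e) (hu : |u t| ≤ C) (hv : |v t| ≤ C) :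
    |u t * u' t + v t * v' t| ≤ 2 * C * √(2 * e) := by
  have hC : 0 ≤ C := (abs_nonneg _).trans hu
  have hu' : |u' t| ≤ √(2 * e) := Real.abs_le_sqrt (by nlinarith [sq_nonneg (v' t)])
  have hv' : |v' t| ≤ √(2 * e) := Real.abs_le_sqrt (by nlinarith [sq_nonneg (u' t)])
  calc |u t * u' t + v t * v' t| ≤ |u t| * |u' t| + |v t| * |v' t| := by
        rw [← abs_mul, ← abs_mul]; exact abs_add_le _ _
    _ ≤ C * √(2 * e) + C * √(2 * e) := by gcongr
    _ = 2 * C * √(2 * e) := by ring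

theorem sub_two_mul_le_integral_rpow {I : Set ℝ} {p K c k M a b : ℝ} (hp : 0 ≤ p) (hk : 0 ≤ k)
    (hF : Continuous F) (hK : ∀ z : ℝ × ℝ, F z ≤ K * (|z.1| ^ p + |z.2| ^ p)) (hab : a ≤ b)
    (hsub : Icc a b ⊆ I)
    (hu : ∀ t ∈ I, HasDerivAt u (u' t) t) (hv : ∀ t ∈ I, HasDerivAt v (v' t) t)
    (hG : ∀ t ∈ I, HasDerivAt (fun s => u s * u' s + v s * v' s) (c - k * F (u t, v t)) t)
    (hM : ∀ t ∈ I, |u t * u' t + v t * v' t| ≤ M) :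
    (b - a) * c - 2 * M ≤ k * K * ∫ t in Icc a b, (|u t| ^ p + |v t| ^ p) := by
  have hcu : ContinuousOn u (Icc a b) := fun t ht =>
    (hu t (hsub ht)).continuousAt.continuousWithinAt
  have hcv : ContinuousOn v (Icc a b) := fun t ht =>
    (hv t (hsub ht)).continuousAt.continuousWithinAt
  have hcF : ContinuousOn (fun t => k * F (u t, v t)) (Icc a b) :=
    continuousOn_const.mul (hF.comp_continuousOn (hcu.prodMk hcv))
  have hcP : ContinuousOn (fun t => |u t| ^ p + |v t| ^ p) (Icc a b) :=
    (hcu.abs.rpow_const fun _ _ => Or.inr hp).add (hcv.abs.rpow_const fun _ _ => Or.inr hp)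
  calc (b - a) * c - 2 * M ≤ ∫ t in a..b, k * F (u t, v t) :=
        sub_two_mul_le_integral_of_hasDerivAt hab (fun t ht => hG t (hsub ht))
          (hcF.intervalIntegrable_of_Icc hab) (hM a (hsub (left_mem_Icc.2 hab)))
          (hM b (hsub (right_mem_Icc.2 hab)))
    _ ≤ ∫ t in a..b, k * K * (|u t| ^ p + |v t| ^ p) :=
        intervalIntegral.integral_mono_on hab (hcF.intervalIntegrable_of_Icc hab)
          ((continuousOn_const.mul hcP).intervalIntegrable_of_Icc hab) fun t _ => by
            rw [mul_assoc]; exact mul_le_mul_of_nonneg_left (hK _) hk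
    _ = k * K * ∫ t in Icc a b, (|u t| ^ p + |v t| ^ p) := by
        rw [intervalIntegral.integral_const_mul, intervalIntegral.integral_of_le hab,
          integral_Icc_eq_integral_Ioc]

end Solution

theorem stmt7 (I : Set ℝ) (hI : I = Set.univ ∨ I = Set.Ioi 0)
    (p : ℝ) (hp : 2 < p) (F : ℝ × ℝ → ℝ) (hF : ContDiff ℝ 2 F)
    (hhom : ∀ t : ℝ, 0 < t → ∀ z : ℝ × ℝ, F (t • z) = t ^ p * F z)
    (hpos : ∀ z : ℝ × ℝ, z ≠ 0 → 0 < F z)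
    (u v u' v' u'' v'' : ℝ → ℝ)
    (hbd : ∃ C, ∀ t ∈ I, |u t| ≤ C ∧ |v t| ≤ C)
    (hu : ∀ t ∈ I, HasDerivAt u (u' t) t) (hu' : ∀ t ∈ I, HasDerivAt u' (u'' t) t)
    (hv : ∀ t ∈ I, HasDerivAt v (v' t) t) (hv' : ∀ t ∈ I, HasDerivAt v' (v'' t) t)
    (hequ : ∀ t ∈ I, -u'' t = fderiv ℝ F (u t, v t) (1, 0))
    (heqv : ∀ t ∈ I, -v'' t = fderiv ℝ F (u t, v t) (0, 1))
    (hnt : ∃ t ∈ I, (u t, v t) ≠ (0, 0)) :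
    ∃ ε > (0:ℝ), ∃ δ > (0:ℝ), ∃ r : ℕ → ℝ,
      (∀ n, r n ∈ I) ∧ (∀ n, Set.Icc (r n - ε) (r n + ε) ⊆ I) ∧
      Filter.Tendsto r Filter.atTop Filter.atTop ∧
      ∀ n, δ ≤ ∫ t in Set.Icc (r n - ε) (r n + ε), (|u t| ^ p + |v t| ^ p) := by
  obtain ⟨C, hC⟩ := hbd
  have hp₀ : 0 < p := by linarith
  have hFd : Differentiable ℝ F := hF.differentiable (by norm_num)
  have hF₀ : ∀ z, 0 ≤ F z := fun z => by
    rcases eq_or_ne z 0 with rfl | hz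
    exacts [(map_zero_of_homogeneous hhom hp₀.ne').ge, (hpos z hz).le]
  have hIpos : Ioi 0 ⊆ I := by rcases hI with rfl | rfl <;> simp
  have hIo : IsOpen I ∧ IsPreconnected I := by
    rcases hI with rfl | rfl
    exacts [⟨isOpen_univ, isPreconnected_univ⟩, ⟨isOpen_Ioi, isPreconnected_Ioi⟩]
  obtain ⟨e, he, hE⟩ := exists_pos_energy_eq hIo.1 hIo.2 hFd hpos hu hu' hv hv' hequ heqv hnt
  obtain ⟨K, hK, hFK⟩ := exists_le_mul_norm_rpow_of_homogeneous hFd.continuous hhom hp₀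
  have hFK' : ∀ z : ℝ × ℝ, F z ≤ K * (|z.1| ^ p + |z.2| ^ p) := fun z =>
    (hFK z).trans (mul_le_mul_of_nonneg_left (Prod.rpow_norm_le_add z hp₀.le) hK.le)
  set M := 2 * C * √(2 * e)
  have hM : ∀ t ∈ I, |u t * u' t + v t * v' t| ≤ M := fun t ht =>
    abs_virial_le (hF₀ _) (hE t ht) (hC t ht).1 (hC t ht).2
  have hG : ∀ t ∈ I, HasDerivAt (fun s => u s * u' s + v s * v' s)
      (2 * e - (p + 2) * F (u t, v t)) t := fun t ht =>
    (hasDerivAt_virial hhom (hFd _) (hu t ht) (hu' t ht) (hv t ht) (hv' t ht) (hequ t ht)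
      (heqv t ht)).congr_deriv (by linarith [hE t ht])
  have hM₀ : 0 ≤ M := (abs_nonneg _).trans (hM 1 (hIpos (mem_Ioi.2 one_pos)))
  -- chosen so that `2ε · 2e - 2M = 2e`
  set ε := (M + e) / (2 * e)
  have hε : 0 < ε := by positivity
  have hsub : ∀ n : ℕ, Icc ((n + ε + 1) - ε) ((n + ε + 1) + ε) ⊆ I := fun n t ht =>
    hIpos (show 0 < t by linarith [ht.1, n.cast_nonneg (α := ℝ)])
  refine ⟨ε, hε, 2 * e / ((p + 2) * K), by positivity, fun n => n + ε + 1,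
    fun n => hsub n ⟨by linarith, by linarith⟩, hsub, ?_, fun n => ?_⟩
  · exact tendsto_atTop_add_const_right _ _
      (tendsto_atTop_add_const_right _ _ tendsto_natCast_atTop_atTop)
  · have hwin := sub_two_mul_le_integral_rpow hp₀.le (by linarith) hFd.continuous hFK'
      (by linarith) (hsub n) hu hv hG hM
    have hlen : (n + ε + 1 + ε - (n + ε + 1 - ε)) * (2 * e) - 2 * M = 2 * e := by
      simp only [ε]; field_simp; ring
    rw [div_le_iff₀ (by positivity)]
    linarith
end

section
/- Caccioppoli-type estimate: Let I = ℝ or I = (0,∞), F : ℝ² → ℝ C² and p-homogeneous with p > 2, F > 0 off the origin, c_F := min{F on the unit p-sphere}. Let (u,v) be a bounded C² solution of −u'' = ∂_u F(u,v), −v'' = ∂_v F(u,v) on I that is stable in I \ K for a compact K. Then for every ψ ∈ C¹_c(I \ K), ∫_I (|u|^p + |v|^p) ψ² dt ≤ (p(p−2)c_F)^{−1} ∫_I (u² + v²) (ψ')² dt. -/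
open MeasureTheory Function Set

/-!
Test stability with `φ = ψ • (u, v)`. Euler's identities for the `p`-homogeneous `F` give
`D²F(z)(z, z) = p (p - 1) F(z)` and, through the equation, `u u'' + v v'' = -p F(u, v)`. With these
the second variation at `φ` equals `(u² + v²) ψ'² - p (p - 2) ψ² F(u, v)` plus the derivative of
`ψ² (u u' + v v')`, whose integral vanishes since `ψ` has compact support in `I`. Stability and the
bound `F ≥ c_F (|u|^p + |v|^p)`, obtained by rescaling to the unit `p`-sphere, give the estimate.
-/

def PosHomogeneous {E : Type*} [SMul ℝ E] (p : ℝ) (F : E → ℝ) : Prop :=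
  ∀ t : ℝ, 0 < t → ∀ z, F (t • z) = t ^ p * F z

lemma fderiv_fderiv_apply_eq {E : Type*} [NormedAddCommGroup E] [NormedSpace ℝ E] {F : E → ℝ}
    {x : E} (h : DifferentiableAt ℝ (fderiv ℝ F) x) (c w : E) :
    fderiv ℝ (fun y => fderiv ℝ F y c) x w = fderiv ℝ (fderiv ℝ F) x w c := by
  simp [fderiv_clm_apply h (differentiableAt_const c)]

lemma ContinuousLinearMap.map_mk_eq_mul_add_mul (L : ℝ × ℝ →L[ℝ] ℝ) (a b : ℝ) :
    L (a, b) = a * L (1, 0) + b * L (0, 1) := by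
  rw [← smul_eq_mul, ← smul_eq_mul, ← map_smul, ← map_smul, ← map_add]
  simp

namespace PosHomogeneous

section Module

variable {E : Type*} [AddCommGroup E] [Module ℝ E] {p : ℝ} {F : E → ℝ}

lemma map_zero (hF : PosHomogeneous p F) (hp : p ≠ 0) : F 0 = 0 := by
  have h := hF 2 two_pos 0
  rw [smul_zero] at h
  have h2 : (2 : ℝ) ^ p ≠ 1 := by
    rw [← Real.rpow_zero 2, Ne, Real.rpow_right_inj two_pos (by norm_num)]
    exact hp
  have : ((2 : ℝ) ^ p - 1) * F 0 = 0 := by linear_combination -h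
  exact (mul_eq_zero.1 this).resolve_left (sub_ne_zero.2 h2)

lemma mul_le_of_isLeast {N : E → ℝ} (hF : PosHomogeneous p F) (hN : PosHomogeneous p N)
    (hNpos : ∀ z ≠ 0, 0 < N z) (hp : p ≠ 0) {c : ℝ} (hc : IsLeast (F '' {z | N z = 1}) c)
    (z : E) : c * N z ≤ F z := by
  rcases eq_or_ne z 0 with rfl | hz
  · simp [hF.map_zero hp, hN.map_zero hp]
  set s := N z ^ p⁻¹
  have hNz := hNpos z hz
  have hs : 0 < s := by positivity
  have hsp : s ^ p = N z := Real.rpow_inv_rpow hNz.le hp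
  have hNw : N (s⁻¹ • z) = 1 := by
    have h := hN s hs (s⁻¹ • z)
    rw [smul_inv_smul₀ hs.ne', hsp] at h
    exact (mul_eq_left₀ hNz.ne').1 h.symm
  calc c * N z ≤ F (s⁻¹ • z) * N z := by gcongr; exact hc.2 ⟨_, hNw, rfl⟩
    _ = s ^ p * F (s⁻¹ • z) := by rw [hsp, mul_comm]
    _ = F z := by rw [← hF s hs, smul_inv_smul₀ hs.ne']

end Module

section NormedSpace

variable {E : Type*} [NormedAddCommGroup E] [NormedSpace ℝ E] {p : ℝ} {F : E → ℝ}

lemma fderiv_apply_self (hF : PosHomogeneous p F) {z : E} (hd : DifferentiableAt ℝ F z) :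
    fderiv ℝ F z z = p * F z := by
  have h_chain : HasDerivAt (fun t : ℝ => F (t • z)) (fderiv ℝ F z z) 1 := by
    have hz : HasDerivAt (fun t : ℝ => t • z) z 1 := by
      simpa using (hasDerivAt_id (1 : ℝ)).smul_const z
    exact hd.hasFDerivAt.comp_hasDerivAt_of_eq 1 hz (one_smul ℝ z).symm
  have h_pow : HasDerivAt (fun t : ℝ => t ^ p * F z) (p * F z) 1 := by
    simpa using (Real.hasDerivAt_rpow_const (x := 1) (p := p) (Or.inl one_ne_zero)).mul_const (F z)
  have h_eq : (fun t : ℝ => F (t • z)) =ᶠ[nhds 1] fun t => t ^ p * F z :=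
    (eventually_gt_nhds one_pos).mono fun t ht => hF t ht z
  exact h_chain.unique (h_pow.congr_of_eventuallyEq h_eq)

lemma fderiv_fderiv_apply_self (hF : PosHomogeneous p F) (hd : ContDiff ℝ 2 F) (z : E) :
    fderiv ℝ (fderiv ℝ F) z z z = p * (p - 1) * F z := by
  have hd1 : Differentiable ℝ F := hd.differentiable (by norm_num)
  have hd2 : DifferentiableAt ℝ (fderiv ℝ F) z :=
    (hd.fderiv_right (m := 1) le_rfl).differentiable one_ne_zero z
  have h_euler : (fun y => fderiv ℝ F y y) = fun y => p * F y :=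
    funext fun y => hF.fderiv_apply_self (hd1 y)
  have h := congrArg (fun G => fderiv ℝ G z z) h_euler
  rw [fderiv_clm_apply hd2 differentiableAt_fun_id, fderiv_const_mul (hd1 z)] at h
  simp only [fderiv_fun_id, ContinuousLinearMap.comp_id, add_apply,
    hF.fderiv_apply_self (hd1 z), ContinuousLinearMap.flip_apply,
    smul_apply, smul_eq_mul] at h
  linear_combination h

end NormedSpace

end PosHomogeneous

lemma posHomogeneous_abs_rpow_add_abs_rpow (p : ℝ) :
    PosHomogeneous p (fun z : ℝ × ℝ => |z.1| ^ p + |z.2| ^ p) := by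
  intro t ht z
  simp only [Prod.smul_fst, Prod.smul_snd, smul_eq_mul, abs_mul, abs_of_pos ht,
    Real.mul_rpow ht.le (abs_nonneg _)]
  ring

lemma abs_rpow_add_abs_rpow_pos {p : ℝ} {z : ℝ × ℝ} (hz : z ≠ 0) :
    0 < |z.1| ^ p + |z.2| ^ p := by
  rcases eq_or_ne z.1 0 with h1 | h1
  · have h2 : z.2 ≠ 0 := fun h2 => hz (Prod.ext h1 h2)
    positivity
  · positivity

section Support

variable {X E : Type*} [TopologicalSpace X] [T2Space X] [MeasurableSpace X]
  [OpensMeasurableSpace X] {μ : Measure X} [IsFiniteMeasureOnCompacts μ]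
  [NormedAddCommGroup E] {f : X → E} {U S : Set X}

lemma ContinuousOn.integrable_of_eq_zero_off (hf : ContinuousOn f U) (hU : IsOpen U)
    (hS : IsCompact S) (hSU : S ⊆ U) (h0 : ∀ x ∉ S, f x = 0) : Integrable f μ :=
  (hf.continuous_of_tsupport_subset hU ((closure_minimal (support_subset_iff'.2 h0)
    hS.isClosed).trans hSU)).integrable_of_hasCompactSupport (HasCompactSupport.intro hS h0)

end Support

lemma ContDiffOn.contDiff_of_tsupport_subset {𝕜 E F : Type*} [NontriviallyNormedField 𝕜]
    [NormedAddCommGroup E] [NormedSpace 𝕜 E] [NormedAddCommGroup F] [NormedSpace 𝕜 F]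
    {n : WithTop ℕ∞} {f : E → F} {U : Set E} (hf : ContDiffOn 𝕜 n f U) (hU : IsOpen U)
    (hfU : tsupport f ⊆ U) : ContDiff 𝕜 n f := by
  refine contDiff_iff_contDiffAt.2 fun x => ?_
  by_cases hx : x ∈ tsupport f
  · exact hf.contDiffAt (hU.mem_nhds (hfU hx))
  · exact contDiffAt_const.congr_of_eventuallyEq (notMem_tsupport_iff_eventuallyEq.1 hx)

lemma contDiffOn_one_of_hasDerivAt {f f' : ℝ → ℝ} {U : Set ℝ} (hU : IsOpen U)
    (hf : ∀ t ∈ U, HasDerivAt f (f' t) t) (hf' : ContinuousOn f' U) : ContDiffOn ℝ 1 f U :=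
  (contDiffOn_one_iff_derivWithin hU.uniqueDiffOn).2
    ⟨fun t ht => (hf t ht).differentiableAt.differentiableWithinAt,
      hf'.congr fun t ht => (hf t ht).hasDerivWithinAt.derivWithin (hU.uniqueDiffWithinAt ht)⟩

lemma setIntegral_eq_zero_of_hasDerivAt {E : Type*} [NormedAddCommGroup E] [NormedSpace ℝ E]
    {g g' : ℝ → E} {U S : Set ℝ} (hU : IsOpen U) (hS : IsCompact S) (hSU : S ⊆ U)
    (hg : ∀ t ∈ U, HasDerivAt g (g' t) t) (hg' : ContinuousOn g' U)
    (h0 : ∀ t ∉ S, g t = 0) :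
    ∫ t in U, g' t = 0 := by
  have hgU : tsupport g ⊆ U := (closure_minimal (support_subset_iff'.2 h0) hS.isClosed).trans hSU
  have hdiff : Differentiable ℝ g := fun t => by
    by_cases ht : t ∈ U
    · exact (hg t ht).differentiableAt
    · exact (HasDerivAt.of_notMem_tsupport fun h => ht (hgU h)).differentiableAt
  have hderiv : ∀ t ∈ U, deriv g t = g' t := fun t ht => (hg t ht).deriv
  have hgc : HasCompactSupport g := HasCompactSupport.intro hS h0
  calc ∫ t in U, g' t = ∫ t in U, deriv g t :=
        setIntegral_congr_fun hU.measurableSet fun t ht => (hderiv t ht).symm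
    _ = ∫ t, deriv g t := setIntegral_eq_integral_of_forall_compl_eq_zero
        fun t ht => deriv_of_notMem_tsupport fun h => ht (hgU h)
    _ = 0 := integral_eq_zero_of_hasDerivAt_of_integrable (fun t => (hdiff t).hasDerivAt)
        (((hg'.congr hderiv).continuous_of_tsupport_subset hU
          (tsupport_deriv_subset.trans hgU)).integrable_of_hasCompactSupport hgc.deriv)
        (hdiff.continuous.integrable_of_hasCompactSupport hgc)

section System

variable {p : ℝ} {F : ℝ × ℝ → ℝ} {u v u' v' u'' v'' ψ : ℝ → ℝ}

lemma hasDerivAt_sq_mul_dot_deriv {t : ℝ} (hF : Differentiable ℝ F) (hhom : PosHomogeneous p F)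
    (hψ : DifferentiableAt ℝ ψ t)
    (hu : HasDerivAt u (u' t) t) (hu' : HasDerivAt u' (u'' t) t)
    (hv : HasDerivAt v (v' t) t) (hv' : HasDerivAt v' (v'' t) t)
    (hequ : -u'' t = fderiv ℝ F (u t, v t) (1, 0))
    (heqv : -v'' t = fderiv ℝ F (u t, v t) (0, 1)) :
    HasDerivAt (fun s => ψ s ^ 2 * (u s * u' s + v s * v' s))
      (2 * ψ t * deriv ψ t * (u t * u' t + v t * v' t)
        + ψ t ^ 2 * (u' t ^ 2 + v' t ^ 2 - p * F (u t, v t))) t := by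
  have h_euler : u t * u'' t + v t * v'' t = -(p * F (u t, v t)) := by
    rw [← hhom.fderiv_apply_self (hF _), ContinuousLinearMap.map_mk_eq_mul_add_mul,
      ← hequ, ← heqv]
    ring
  refine ((hψ.hasDerivAt.fun_pow 2).fun_mul
    ((hu.fun_mul hu').fun_add (hv.fun_mul hv'))).congr_deriv ?_
  push_cast
  linear_combination ψ t ^ 2 * h_euler

lemma secondVariation_eq {t : ℝ} (hF : ContDiff ℝ 2 F) (hhom : PosHomogeneous p F)
    (hψ : DifferentiableAt ℝ ψ t) (hu : HasDerivAt u (u' t) t) (hv : HasDerivAt v (v' t) t) :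
    deriv (fun s => ψ s * u s) t ^ 2 + deriv (fun s => ψ s * v s) t ^ 2
        - fderiv ℝ (fun y => fderiv ℝ F y (ψ t * u t, ψ t * v t)) (u t, v t)
          (ψ t * u t, ψ t * v t)
      = (u t ^ 2 + v t ^ 2) * deriv ψ t ^ 2
        + (2 * ψ t * deriv ψ t * (u t * u' t + v t * v' t)
          + ψ t ^ 2 * (u' t ^ 2 + v' t ^ 2 - p * F (u t, v t)))
        - p * (p - 2) * (ψ t ^ 2 * F (u t, v t)) := by
  have hd2 : DifferentiableAt ℝ (fderiv ℝ F) (u t, v t) :=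
    (hF.fderiv_right (m := 1) le_rfl).differentiable one_ne_zero _
  have h_pair : (ψ t * u t, ψ t * v t) = ψ t • (u t, v t) := rfl
  have h_hess : fderiv ℝ (fun y => fderiv ℝ F y (ψ t * u t, ψ t * v t)) (u t, v t)
      (ψ t * u t, ψ t * v t) = ψ t ^ 2 * (p * (p - 1) * F (u t, v t)) := by
    rw [h_pair, fderiv_fderiv_apply_eq hd2]
    simp only [map_smul, smul_apply, hhom.fderiv_fderiv_apply_self hF, smul_eq_mul]
    ring
  rw [(hψ.hasDerivAt.fun_mul hu).deriv, (hψ.hasDerivAt.fun_mul hv).deriv, h_hess]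
  ring

variable {U : Set ℝ}

lemma setIntegral_secondVariation_eq (hU : IsOpen U) (hF : ContDiff ℝ 2 F)
    (hhom : PosHomogeneous p F)
    (hu : ∀ t ∈ U, HasDerivAt u (u' t) t) (hu' : ∀ t ∈ U, HasDerivAt u' (u'' t) t)
    (hv : ∀ t ∈ U, HasDerivAt v (v' t) t) (hv' : ∀ t ∈ U, HasDerivAt v' (v'' t) t)
    (hequ : ∀ t ∈ U, -u'' t = fderiv ℝ F (u t, v t) (1, 0))
    (heqv : ∀ t ∈ U, -v'' t = fderiv ℝ F (u t, v t) (0, 1))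
    (hψ : ContDiff ℝ 1 ψ) (hψc : HasCompactSupport ψ) (hψU : tsupport ψ ⊆ U) :
    ∫ t in U, (deriv (fun s => ψ s * u s) t ^ 2 + deriv (fun s => ψ s * v s) t ^ 2
        - fderiv ℝ (fun y => fderiv ℝ F y (ψ t * u t, ψ t * v t)) (u t, v t)
          (ψ t * u t, ψ t * v t))
      = (∫ t in U, (u t ^ 2 + v t ^ 2) * deriv ψ t ^ 2)
        - p * (p - 2) * ∫ t in U, ψ t ^ 2 * F (u t, v t) := by
  have hψd : Differentiable ℝ ψ := hψ.differentiable one_ne_zero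
  have hψ_c : Continuous ψ := hψd.continuous
  have hψ' : Continuous (deriv ψ) := hψ.continuous_deriv le_rfl
  have hFc : Continuous F := hF.continuous
  have hu_c : ContinuousOn u U := HasDerivAt.continuousOn hu
  have hv_c : ContinuousOn v U := HasDerivAt.continuousOn hv
  have hu'_c : ContinuousOn u' U := HasDerivAt.continuousOn hu'
  have hv'_c : ContinuousOn v' U := HasDerivAt.continuousOn hv'
  have hint (f : ℝ → ℝ) (hf : ContinuousOn f U) (h0 : ∀ t ∉ tsupport ψ, f t = 0) :
      IntegrableOn f U :=
    (hf.integrable_of_eq_zero_off hU hψc hψU h0).integrableOn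
  have h_kin : IntegrableOn (fun t => (u t ^ 2 + v t ^ 2) * deriv ψ t ^ 2) U :=
    hint _ (by fun_prop) fun t ht => by simp [deriv_of_notMem_tsupport ht]
  have h_pot : IntegrableOn (fun t => ψ t ^ 2 * F (u t, v t)) U :=
    hint _ (by fun_prop) fun t ht => by simp [image_eq_zero_of_notMem_tsupport ht]
  have h_flux : IntegrableOn (fun t => 2 * ψ t * deriv ψ t * (u t * u' t + v t * v' t)
      + ψ t ^ 2 * (u' t ^ 2 + v' t ^ 2 - p * F (u t, v t))) U :=
    hint _ (by fun_prop) fun t ht => by simp [image_eq_zero_of_notMem_tsupport ht]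
  have h_flux_zero := setIntegral_eq_zero_of_hasDerivAt hU hψc hψU
    (fun t ht => hasDerivAt_sq_mul_dot_deriv (hF.differentiable (by norm_num)) hhom (hψd t)
      (hu t ht) (hu' t ht) (hv t ht) (hv' t ht) (hequ t ht) (heqv t ht))
    (by fun_prop) (fun t ht => by simp [image_eq_zero_of_notMem_tsupport ht])
  rw [setIntegral_congr_fun hU.measurableSet fun t ht =>
      secondVariation_eq hF hhom (hψd t) (hu t ht) (hv t ht),
    integral_sub (h_kin.fun_add h_flux) (h_pot.const_mul _), integral_add h_kin h_flux, h_flux_zero,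
    integral_const_mul, add_zero]

lemma mul_setIntegral_le_of_isLeast (hU : IsOpen U) (hp : p ≠ 0) (hFc : Continuous F)
    (hhom : PosHomogeneous p F) {c : ℝ} (hc : 0 ≤ c)
    (hmin : IsLeast (F '' {z : ℝ × ℝ | |z.1| ^ p + |z.2| ^ p = 1}) c)
    (hu : ContinuousOn u U) (hv : ContinuousOn v U)
    (hψ : Continuous ψ) (hψc : HasCompactSupport ψ) (hψU : tsupport ψ ⊆ U) :
    c * ∫ t in U, (|u t| ^ p + |v t| ^ p) * ψ t ^ 2 ≤ ∫ t in U, ψ t ^ 2 * F (u t, v t) := by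
  have h_pot : Integrable (fun t => ψ t ^ 2 * F (u t, v t)) :=
    (by fun_prop : ContinuousOn (fun t => ψ t ^ 2 * F (u t, v t)) U).integrable_of_eq_zero_off hU
      hψc hψU fun t ht => by simp [image_eq_zero_of_notMem_tsupport ht]
  have h_bound (z : ℝ × ℝ) : c * (|z.1| ^ p + |z.2| ^ p) ≤ F z :=
    hhom.mul_le_of_isLeast (posHomogeneous_abs_rpow_add_abs_rpow p)
      (fun _ hz => abs_rpow_add_abs_rpow_pos hz) hp hmin z
  rw [← integral_const_mul]
  refine integral_mono_of_nonneg (.of_forall fun t => by positivity) h_pot.integrableOn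
    (.of_forall fun t => ?_)
  calc c * ((|u t| ^ p + |v t| ^ p) * ψ t ^ 2) = ψ t ^ 2 * (c * (|u t| ^ p + |v t| ^ p)) := by
        ring
    _ ≤ ψ t ^ 2 * F (u t, v t) := by gcongr; exact h_bound (u t, v t)

end System

theorem stmt9_general (I : Set ℝ) (hI : I = Set.univ ∨ I = Set.Ioi 0)
    (p : ℝ) (hp : 2 < p) (F : ℝ × ℝ → ℝ) (hF : ContDiff ℝ 2 F)
    (hhom : ∀ t : ℝ, 0 < t → ∀ z : ℝ × ℝ, F (t • z) = t ^ p * F z)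
    (cF : ℝ) (hcF : 0 < cF)
    (hmin : IsLeast (F '' {z : ℝ × ℝ | |z.1| ^ p + |z.2| ^ p = 1}) cF)
    (u v u' v' u'' v'' : ℝ → ℝ)
    (hu : ∀ t ∈ I, HasDerivAt u (u' t) t) (hu' : ∀ t ∈ I, HasDerivAt u' (u'' t) t)
    (hv : ∀ t ∈ I, HasDerivAt v (v' t) t) (hv' : ∀ t ∈ I, HasDerivAt v' (v'' t) t)
    (hequ : ∀ t ∈ I, -u'' t = fderiv ℝ F (u t, v t) (1, 0))
    (heqv : ∀ t ∈ I, -v'' t = fderiv ℝ F (u t, v t) (0, 1))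
    (K : Set ℝ)
    (hstab : ∀ φ₁ φ₂ : ℝ → ℝ, ContDiff ℝ 1 φ₁ → ContDiff ℝ 1 φ₂ →
      HasCompactSupport φ₁ → HasCompactSupport φ₂ →
      tsupport φ₁ ⊆ I \ K → tsupport φ₂ ⊆ I \ K →
      0 ≤ ∫ t in I, (deriv φ₁ t ^ 2 + deriv φ₂ t ^ 2
          - fderiv ℝ (fun y => fderiv ℝ F y (φ₁ t, φ₂ t)) (u t, v t) (φ₁ t, φ₂ t))) :
    ∀ ψ : ℝ → ℝ, ContDiff ℝ 1 ψ → HasCompactSupport ψ → tsupport ψ ⊆ I \ K →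
      ∫ t in I, (|u t| ^ p + |v t| ^ p) * ψ t ^ 2
        ≤ (p * (p - 2) * cF)⁻¹ * ∫ t in I, (u t ^ 2 + v t ^ 2) * deriv ψ t ^ 2 := by
  intro ψ hψ hψc hψK
  have hI_open : IsOpen I := by rcases hI with rfl | rfl; exacts [isOpen_univ, isOpen_Ioi]
  have hψI : tsupport ψ ⊆ I := hψK.trans sdiff_subset
  have h_test {w w' w'' : ℝ → ℝ} (hw : ∀ t ∈ I, HasDerivAt w (w' t) t)
      (hw' : ∀ t ∈ I, HasDerivAt w' (w'' t) t) : ContDiff ℝ 1 (fun t => ψ t * w t) :=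
    (hψ.contDiffOn.mul (contDiffOn_one_of_hasDerivAt hI_open hw
      (HasDerivAt.continuousOn hw'))).contDiff_of_tsupport_subset hI_open
      (tsupport_mul_subset_left.trans hψI)
  have h_stab := hstab _ _ (h_test hu hu') (h_test hv hv') hψc.mul_right hψc.mul_right
    (tsupport_mul_subset_left.trans hψK) (tsupport_mul_subset_left.trans hψK)
  rw [setIntegral_secondVariation_eq hI_open hF hhom hu hu' hv hv' hequ heqv hψ hψc hψI]
    at h_stab
  have h_lower := mul_setIntegral_le_of_isLeast hI_open (by linarith : 0 < p).ne' hF.continuous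
    hhom hcF.le hmin (HasDerivAt.continuousOn hu) (HasDerivAt.continuousOn hv) hψ.continuous hψc
    hψI
  have hp2 : 0 < p * (p - 2) := by nlinarith
  rw [le_inv_mul_iff₀ (mul_pos hp2 hcF)]
  calc p * (p - 2) * cF * ∫ t in I, (|u t| ^ p + |v t| ^ p) * ψ t ^ 2
      ≤ p * (p - 2) * ∫ t in I, ψ t ^ 2 * F (u t, v t) := by
        rw [mul_assoc]; exact mul_le_mul_of_nonneg_left h_lower hp2.le
    _ ≤ ∫ t in I, (u t ^ 2 + v t ^ 2) * deriv ψ t ^ 2 := by linarith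

theorem stmt9 (I : Set ℝ) (hI : I = Set.univ ∨ I = Set.Ioi 0)
    (p : ℝ) (hp : 2 < p) (F : ℝ × ℝ → ℝ) (hF : ContDiff ℝ 2 F)
    (hhom : ∀ t : ℝ, 0 < t → ∀ z : ℝ × ℝ, F (t • z) = t ^ p * F z)
    (hpos : ∀ z : ℝ × ℝ, z ≠ 0 → 0 < F z)
    (cF : ℝ) (hcF : 0 < cF)
    (hmin : IsLeast (F '' {z : ℝ × ℝ | |z.1| ^ p + |z.2| ^ p = 1}) cF)
    (u v u' v' u'' v'' : ℝ → ℝ)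
    (hbd : ∃ C, ∀ t ∈ I, |u t| ≤ C ∧ |v t| ≤ C)
    (hu : ∀ t ∈ I, HasDerivAt u (u' t) t) (hu' : ∀ t ∈ I, HasDerivAt u' (u'' t) t)
    (hv : ∀ t ∈ I, HasDerivAt v (v' t) t) (hv' : ∀ t ∈ I, HasDerivAt v' (v'' t) t)
    (hequ : ∀ t ∈ I, -u'' t = fderiv ℝ F (u t, v t) (1, 0))
    (heqv : ∀ t ∈ I, -v'' t = fderiv ℝ F (u t, v t) (0, 1))
    (K : Set ℝ) (hK : IsCompact K) (hKI : K ⊆ I)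
    (hstab : ∀ φ₁ φ₂ : ℝ → ℝ, ContDiff ℝ 1 φ₁ → ContDiff ℝ 1 φ₂ →
      HasCompactSupport φ₁ → HasCompactSupport φ₂ →
      tsupport φ₁ ⊆ I \ K → tsupport φ₂ ⊆ I \ K →
      0 ≤ ∫ t in I, (deriv φ₁ t ^ 2 + deriv φ₂ t ^ 2
          - fderiv ℝ (fun y => fderiv ℝ F y (φ₁ t, φ₂ t)) (u t, v t) (φ₁ t, φ₂ t))) :
    ∀ ψ : ℝ → ℝ, ContDiff ℝ 1 ψ → HasCompactSupport ψ → tsupport ψ ⊆ I \ K →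
      ∫ t in I, (|u t| ^ p + |v t| ^ p) * ψ t ^ 2
        ≤ (p * (p - 2) * cF)⁻¹ * ∫ t in I, (u t ^ 2 + v t ^ 2) * deriv ψ t ^ 2 :=
  stmt9_general I hI p hp F hF hhom cF hcF hmin u v u' v' u'' v'' hu hu' hv hv' hequ heqv K hstab
end

section
/- Doubling lemma (simplified Polacik–Quittner–Souplet): Let (X,d) be a complete metric space and M : X → (0,∞) be bounded on compact subsets of X. Then for any s* ∈ X there exists t* in the closed ball of radius 2 around s* such that M(t*) ≥ M(s*) and M(t) ≤ 2 M(t*) for all t in the open ball of radius M(s*)/M(t*) around t*. -/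
theorem stmt12 {X : Type*} [MetricSpace X] [CompleteSpace X]
    (M : X → ℝ) (hMpos : ∀ x, 0 < M x)
    (hMb : ∀ K : Set X, IsCompact K → ∃ C, ∀ x ∈ K, M x ≤ C)
    (s : X) :
    ∃ t ∈ Metric.closedBall s 2, M s ≤ M t ∧
      ∀ y ∈ Metric.ball t (M s / M t), M y ≤ 2 * M t := by
  by_contra hcon
  push_neg at hcon
  have H : ∀ t ∈ Metric.closedBall s 2, M s ≤ M t →
      ∃ y ∈ Metric.ball t (M s / M t), 2 * M t < M y := hcon
  choose! F hF1 hF2 using H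
  set u : ℕ → X := fun n => F^[n] s with hu
  have husucc : ∀ n, u (n + 1) = F (u n) := fun n => Function.iterate_succ_apply' F n s
  have key : ∀ n, dist s (u n) ≤ 2 - 2 * (1/2 : ℝ) ^ n ∧ 2 ^ n * M s ≤ M (u n) := by
    intro n
    induction n with
    | zero => simp [hu]
    | succ n ih =>
      obtain ⟨hd, hm⟩ := ih
      have hp : (0:ℝ) < (1/2) ^ n := by positivity
      have h2p : (0:ℝ) < 2 ^ n := by positivity
      have h2one : (1:ℝ) ≤ 2 ^ n := one_le_pow₀ (by norm_num)
      have hmem : u n ∈ Metric.closedBall s 2 := by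
        rw [Metric.mem_closedBall, dist_comm]; linarith
      have hMs : M s ≤ M (u n) := by nlinarith [hMpos s]
      have hball := hF1 (u n) hmem hMs
      have hgt := hF2 (u n) hmem hMs
      rw [Metric.mem_ball] at hball
      have hmul : (1/2 : ℝ) ^ n * 2 ^ n = 1 := by rw [← mul_pow]; norm_num
      have hdiv : M s / M (u n) ≤ (1/2 : ℝ) ^ n := by
        rw [div_le_iff₀ (hMpos _)]
        nlinarith [hMpos s]
      constructor
      · have : dist s (u (n+1)) ≤ dist s (u n) + dist (u n) (u (n+1)) := dist_triangle _ _ _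
        have hlt : dist (u n) (u (n+1)) < (1/2 : ℝ) ^ n := by
          rw [husucc n, dist_comm]; exact lt_of_lt_of_le hball hdiv
        have hps : (1/2 : ℝ) ^ (n+1) = (1/2) ^ n * (1/2) := pow_succ _ _
        linarith
      · rw [husucc n]
        have hps : (2:ℝ) ^ (n+1) = 2 ^ n * 2 := pow_succ _ _
        have h2hm : 2 * (2 ^ n * M s) ≤ 2 * M (u n) :=
          mul_le_mul_of_nonneg_left hm (by norm_num)
        rw [hps]; linarith
  have hstep : ∀ n, dist (u n) (u (n+1)) ≤ 1 * (1/2 : ℝ) ^ n := by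
    intro n
    obtain ⟨hd, hm⟩ := key n
    have hp : (0:ℝ) < (1/2) ^ n := by positivity
    have h2one : (1:ℝ) ≤ (2:ℝ) ^ n := one_le_pow₀ (by norm_num)
    have hmem : u n ∈ Metric.closedBall s 2 := by
      rw [Metric.mem_closedBall, dist_comm]; linarith
    have hMs : M s ≤ M (u n) := by nlinarith [hMpos s]
    have hball := hF1 (u n) hmem hMs
    rw [Metric.mem_ball] at hball
    have hmul : (1/2 : ℝ) ^ n * 2 ^ n = 1 := by rw [← mul_pow]; norm_num
    have hdiv : M s / M (u n) ≤ (1/2 : ℝ) ^ n := by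
      rw [div_le_iff₀ (hMpos _)]
      nlinarith [hMpos s]
    rw [husucc n, dist_comm, one_mul]
    exact le_of_lt (lt_of_lt_of_le hball hdiv)
  have hcauchy : CauchySeq u := cauchySeq_of_le_geometric (1/2) 1 (by norm_num) hstep
  obtain ⟨l, hl⟩ := cauchySeq_tendsto_of_complete hcauchy
  obtain ⟨C, hC⟩ := hMb (insert l (Set.range u)) hl.isCompact_insert_range
  obtain ⟨n, hn⟩ := pow_unbounded_of_one_lt (C / M s) (by norm_num : (1:ℝ) < 2)
  have h1 := hC (u n) (Set.mem_insert_of_mem _ ⟨n, rfl⟩)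
  have h2 := (key n).2
  rw [div_lt_iff₀ (hMpos s)] at hn
  nlinarith
end

section
/- Exponential decay bootstrap: let 0 < γ < δ and let h ∈ C²([0,∞), ℝ²) satisfy |d/dt (e^{−γt} h'(t))| ≤ C e^{−δt} |h(t)| for all t ≥ 0 with some constant C > 0, together with the a priori bound |h(t)| ≤ C' e^{(γ/2)t} and lim_{t→∞} e^{−γt} h'(t) = 0. Then h'(t) decays exponentially as t → ∞ and the limit lim_{t→∞} h(t) exists. -/
/-!
Write `g = e^{-γt} h'`. If `‖h t‖ ≤ B e^{ct}` with `c < δ`, then `‖g'‖ ≤ C B e^{(c-δ)t}`, and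
since `g → 0`, integrating from `t` to `∞` gives `‖h' t‖ ≤ C B/(δ-c) · e^{(c+γ-δ)t}`. Integrating
once more from `0` bounds `h` by `e^{c't}` for any `c' > 0` with `c' ≥ c - (δ - γ)`. Starting
from `c = γ/2`, finitely many steps bring the exponent of `h` below `δ - γ`; then `h'` decays
exponentially and `h` is Cauchy at `∞`.
Pairs `(h₁, h₂)` are encoded as complex numbers, whose norm is the Euclidean norm of `ℝ²`.
-/

open Set Filter Real Topology

lemma tendsto_exp_neg_mul_atTop_nhds_zero {a : ℝ} (ha : 0 < a) :
    Tendsto (fun t => exp (-a * t)) atTop (𝓝 0) :=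
  tendsto_exp_atBot.comp (tendsto_id.const_mul_atTop_of_neg (neg_lt_zero.2 ha))

section ExponentialBounds

variable {E : Type*} [NormedAddCommGroup E] [NormedSpace ℝ E] {f f' : ℝ → E} {M a : ℝ}

lemma norm_sub_le_of_norm_deriv_le_exp (ha : a ≠ 0)
    (hf : ∀ x ∈ Ici (0 : ℝ), HasDerivWithinAt f (f' x) (Ici 0) x)
    (hf' : ∀ x ∈ Ici (0 : ℝ), ‖f' x‖ ≤ M * exp (a * x)) {t T : ℝ} (ht : 0 ≤ t) (htT : t ≤ T) :
    ‖f T - f t‖ ≤ M / a * (exp (a * T) - exp (a * t)) := by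
  have hsub : ∀ x ∈ Icc t T, Ici x ⊆ Ici (0 : ℝ) := fun x hx =>
    Ici_subset_Ici.2 (ht.trans hx.1)
  have hB : ∀ x,
      HasDerivAt (fun y => M / a * (exp (a * y) - exp (a * t))) (M * exp (a * x)) x := fun x => by
    refine ((((hasDerivAt_id' x).const_mul a).exp.sub_const _).const_mul (M / a)).congr_deriv ?_
    field_simp
  refine image_norm_le_of_norm_deriv_right_le_deriv_boundary' (f := fun x => f x - f t)
    (fun x hx => ((hf x (ht.trans hx.1)).continuousWithinAt.mono
      (Icc_subset_Ici_self.trans (hsub t (left_mem_Icc.2 htT)))).sub continuousWithinAt_const)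
    (fun x hx => ((hf x (ht.trans hx.1)).mono (hsub x (Ico_subset_Icc_self hx))).sub_const _)
    (by simp) (fun x _ => (hB x).continuousAt.continuousWithinAt)
    (fun x _ => (hB x).hasDerivWithinAt) (fun x hx => hf' x (ht.trans hx.1)) ⟨htT, le_rfl⟩

lemma norm_le_of_norm_deriv_le_exp (ha : 0 < a)
    (hf : ∀ x ∈ Ici (0 : ℝ), HasDerivWithinAt f (f' x) (Ici 0) x)
    (hf' : ∀ x ∈ Ici (0 : ℝ), ‖f' x‖ ≤ M * exp (a * x)) {t : ℝ} (ht : 0 ≤ t) :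
    ‖f t‖ ≤ (‖f 0‖ + M / a) * exp (a * t) := by
  have hM : 0 ≤ M := by simpa using (norm_nonneg _).trans (hf' 0 self_mem_Ici)
  have hexp : 1 ≤ exp (a * t) := one_le_exp (by positivity)
  have := norm_sub_le_of_norm_deriv_le_exp ha.ne' hf hf' le_rfl ht
  rw [mul_zero, exp_zero] at this
  have : ‖f t‖ ≤ ‖f 0‖ + ‖f t - f 0‖ := norm_le_insert' _ _
  nlinarith [norm_nonneg (f 0), div_nonneg hM ha.le]

lemma norm_le_of_norm_deriv_le_exp_of_tendsto_zero (ha : 0 < a)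
    (hf : ∀ x ∈ Ici (0 : ℝ), HasDerivWithinAt f (f' x) (Ici 0) x)
    (hf' : ∀ x ∈ Ici (0 : ℝ), ‖f' x‖ ≤ M * exp (-a * x)) (hlim : Tendsto f atTop (𝓝 0))
    {t : ℝ} (ht : 0 ≤ t) :
    ‖f t‖ ≤ M / a * exp (-a * t) := by
  have hlhs : Tendsto (fun T => ‖f T - f t‖) atTop (𝓝 ‖f t‖) := by
    simpa using (hlim.sub_const (f t)).norm
  have hrhs : Tendsto (fun T => M / -a * (exp (-a * T) - exp (-a * t))) atTop
      (𝓝 (M / a * exp (-a * t))) := by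
    convert ((tendsto_exp_neg_mul_atTop_nhds_zero ha).sub_const (exp (-a * t))).const_mul
      (M / -a) using 2
    rw [zero_sub, div_neg, neg_mul_neg]
  exact le_of_tendsto_of_tendsto hlhs hrhs ((eventually_ge_atTop t).mono fun T hT =>
    norm_sub_le_of_norm_deriv_le_exp (neg_ne_zero.2 ha.ne') hf hf' ht hT)

lemma exists_tendsto_of_norm_deriv_le_exp [CompleteSpace E] (ha : 0 < a)
    (hf : ∀ x ∈ Ici (0 : ℝ), HasDerivWithinAt f (f' x) (Ici 0) x)
    (hf' : ∀ x ∈ Ici (0 : ℝ), ‖f' x‖ ≤ M * exp (-a * x)) :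
    ∃ L, Tendsto f atTop (𝓝 L) := by
  have hM : 0 ≤ M := by simpa using (norm_nonneg _).trans (hf' 0 self_mem_Ici)
  have htail : ∀ t T, 0 ≤ t → t ≤ T → dist (f T) (f t) ≤ M / a * exp (-a * t) := by
    intro t T ht hT
    rw [dist_eq_norm]
    refine (norm_sub_le_of_norm_deriv_le_exp (neg_ne_zero.2 ha.ne') hf hf' ht hT).trans ?_
    rw [div_neg, neg_mul_comm, neg_sub]
    have : 0 ≤ M / a * exp (-a * T) := by positivity
    linarith
  have hsmall : Tendsto (fun t => M / a * exp (-a * t)) atTop (𝓝 0) := by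
    simpa using (tendsto_exp_neg_mul_atTop_nhds_zero ha).const_mul (M / a)
  refine cauchySeq_tendsto_of_complete (Metric.cauchySeq_iff'.2 fun ε hε => ?_)
  obtain ⟨N, hNε, hN⟩ :=
    ((hsmall.eventually (gt_mem_nhds hε)).and (eventually_ge_atTop 0)).exists
  exact ⟨N, fun T hT => (htail N T hN hT).trans_lt hNε⟩

end ExponentialBounds

lemma prop_of_step_down {P : ℝ → Prop} {κ ε c₀ : ℝ} (hκ : 0 < κ) (hε : ε ≤ c₀) (h₀ : P c₀)
    (hstep : ∀ c c', c ≤ c₀ → ε ≤ c' → c - κ ≤ c' → P c → P c') : P ε := by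
  have hP : ∀ n : ℕ, P (max (c₀ - n * κ) ε) := by
    intro n
    induction n with
    | zero => simpa [max_eq_left hε] using h₀
    | succ n ih =>
      refine hstep _ _ (max_le (by nlinarith [n.cast_nonneg (α := ℝ)]) hε) (le_max_right _ _)
        ?_ ih
      push_cast
      rw [sub_le_iff_le_add]
      exact max_le (by linarith [le_max_left (c₀ - (n + 1) * κ) ε])
        (by linarith [le_max_right (c₀ - (n + 1) * κ) ε])
  obtain ⟨n, hn⟩ := exists_nat_ge ((c₀ - ε) / κ)
  have : c₀ - n * κ ≤ ε := by rw [div_le_iff₀ hκ] at hn; linarith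
  simpa [max_eq_right this] using hP n

section Bootstrap

variable {E : Type*} [NormedAddCommGroup E]

def HasExpBound (u : ℝ → E) (c : ℝ) : Prop :=
  ∃ B, ∀ t ∈ Ici (0 : ℝ), ‖u t‖ ≤ B * exp (c * t)

lemma HasExpBound.mono {u : ℝ → E} {c c' : ℝ} (hu : HasExpBound u c) (hcc' : c ≤ c') :
    HasExpBound u c' := by
  obtain ⟨B, hB⟩ := hu
  have hB0 : 0 ≤ B := by simpa using (norm_nonneg _).trans (hB 0 self_mem_Ici)
  exact ⟨B, fun t ht => (hB t ht).trans
    (mul_le_mul_of_nonneg_left (exp_le_exp.2 (mul_le_mul_of_nonneg_right hcc' ht)) hB0)⟩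

variable [NormedSpace ℝ E]

lemma HasExpBound.of_deriv {f f' : ℝ → E} {c : ℝ} (hc : 0 < c)
    (hf : ∀ x ∈ Ici (0 : ℝ), HasDerivWithinAt f (f' x) (Ici 0) x) (hf' : HasExpBound f' c) :
    HasExpBound f c :=
  let ⟨_, hB⟩ := hf'
  ⟨_, fun _ ht => norm_le_of_norm_deriv_le_exp hc hf hB ht⟩

variable {γ δ C : ℝ} {h h' g' : ℝ → E}

lemma HasExpBound.deriv_of_norm_deriv_exp_smul_le (hC : 0 ≤ C)
    (hg : ∀ t ∈ Ici (0 : ℝ), HasDerivWithinAt (fun s => exp (-γ * s) • h' s) (g' t) (Ici 0) t)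
    (hineq : ∀ t ∈ Ici (0 : ℝ), ‖g' t‖ ≤ C * exp (-δ * t) * ‖h t‖)
    (hlim : Tendsto (fun t => exp (-γ * t) • h' t) atTop (𝓝 0)) {c : ℝ} (hcδ : c < δ)
    (hb : HasExpBound h c) : HasExpBound h' (c + γ - δ) := by
  obtain ⟨B, hB⟩ := hb
  have hg' : ∀ t ∈ Ici (0 : ℝ), ‖g' t‖ ≤ C * B * exp (-(δ - c) * t) := fun t ht =>
    calc ‖g' t‖ ≤ C * exp (-δ * t) * (B * exp (c * t)) :=
          (hineq t ht).trans (mul_le_mul_of_nonneg_left (hB t ht) (by positivity))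
      _ = C * B * exp (-(δ - c) * t) := by rw [mul_mul_mul_comm, ← exp_add]; ring_nf
  refine ⟨C * B / (δ - c), fun t ht => ?_⟩
  have hgt := norm_le_of_norm_deriv_le_exp_of_tendsto_zero (sub_pos.2 hcδ) hg hg' hlim ht
  rw [norm_smul, norm_of_nonneg (exp_pos _).le] at hgt
  calc ‖h' t‖ = exp (γ * t) * (exp (-γ * t) * ‖h' t‖) := by
        rw [← mul_assoc, ← exp_add]; ring_nf; simp
    _ ≤ exp (γ * t) * (C * B / (δ - c) * exp (-(δ - c) * t)) := by gcongr
    _ = C * B / (δ - c) * exp ((c + γ - δ) * t) := by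
        rw [mul_left_comm, ← exp_add]; ring_nf

theorem exists_decay_and_tendsto_of_norm_deriv_exp_smul_le [CompleteSpace E] (hγ : 0 < γ)
    (hδ : γ < δ) (hC : 0 ≤ C) (hh : ∀ t ∈ Ici (0 : ℝ), HasDerivWithinAt h (h' t) (Ici 0) t)
    (hg : ∀ t ∈ Ici (0 : ℝ), HasDerivWithinAt (fun s => exp (-γ * s) • h' s) (g' t) (Ici 0) t)
    (hineq : ∀ t ∈ Ici (0 : ℝ), ‖g' t‖ ≤ C * exp (-δ * t) * ‖h t‖)
    (hgrowth : HasExpBound h (γ / 2))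
    (hlim : Tendsto (fun t => exp (-γ * t) • h' t) atTop (𝓝 0)) :
    (∃ c > 0, HasExpBound h' (-c)) ∧ ∃ L, Tendsto h atTop (𝓝 L) := by
  set ε := min (γ / 2) ((δ - γ) / 2)
  have hε : 0 < ε := lt_min (by linarith) (by linarith)
  have hεγ : ε ≤ γ / 2 := min_le_left _ _
  have hεδ : ε ≤ (δ - γ) / 2 := min_le_right _ _
  have hbound : HasExpBound h ε :=
    prop_of_step_down (sub_pos.2 hδ) hεγ hgrowth fun c c' hc hc' hcc' hb =>
      HasExpBound.of_deriv (hε.trans_le hc') hh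
        ((hb.deriv_of_norm_deriv_exp_smul_le hC hg hineq hlim (by linarith)).mono (by linarith))
  have hdecay : HasExpBound h' (-(δ - γ - ε)) :=
    (hbound.deriv_of_norm_deriv_exp_smul_le hC hg hineq hlim (by linarith)).mono (by linarith)
  have hpos : 0 < δ - γ - ε := by linarith
  obtain ⟨A, hA⟩ := hdecay
  exact ⟨⟨_, hpos, A, hA⟩, exists_tendsto_of_norm_deriv_le_exp hpos hh hA⟩

end Bootstrap

lemma HasDerivWithinAt.exp_neg_mul_smul {E : Type*} [NormedAddCommGroup E] [NormedSpace ℝ E]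
    {f : ℝ → E} {f' : E} {s : Set ℝ} {t : ℝ} (γ : ℝ) (hf : HasDerivWithinAt f f' s t) :
    HasDerivWithinAt (fun x => Real.exp (-γ * x) • f x)
      (Real.exp (-γ * t) • (f' - γ • f t)) s t := by
  refine (((hasDerivAt_id' t).const_mul (-γ)).exp.hasDerivWithinAt.smul hf).congr_deriv ?_
  simp only [mul_one]
  module

namespace Complex

lemma norm_mk (a b : ℝ) : ‖(⟨a, b⟩ : ℂ)‖ = √(a ^ 2 + b ^ 2) :=
  norm_eq_sqrt_sq_add_sq _

lemma real_smul_mk (r a b : ℝ) : r • (⟨a, b⟩ : ℂ) = ⟨r * a, r * b⟩ := by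
  apply Complex.ext <;> simp

lemma hasDerivWithinAt_mk {u v : ℝ → ℝ} {u' v' : ℝ} {s : Set ℝ} {t : ℝ}
    (hu : HasDerivWithinAt u u' s t) (hv : HasDerivWithinAt v v' s t) :
    HasDerivWithinAt (fun x => (⟨u x, v x⟩ : ℂ)) ⟨u', v'⟩ s t :=
  equivRealProdCLM.symm.hasFDerivAt.comp_hasDerivWithinAt t (hu.prodMk hv)

lemma tendsto_mk {α : Type*} {l : Filter α} {u v : α → ℝ} {a b : ℝ}
    (hu : Tendsto u l (𝓝 a)) (hv : Tendsto v l (𝓝 b)) :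
    Tendsto (fun x => (⟨u x, v x⟩ : ℂ)) l (𝓝 ⟨a, b⟩) :=
  equivRealProdCLM.symm.continuous.tendsto (a, b) |>.comp (hu.prodMk_nhds hv)

end Complex

theorem stmt16_general (γ δ C C' : ℝ) (hγ : 0 < γ) (hδ : γ < δ) (hC : 0 < C)
    (h₁ h₂ h₁' h₂' h₁'' h₂'' : ℝ → ℝ)
    (hd1 : ∀ t ∈ Set.Ici (0:ℝ), HasDerivWithinAt h₁ (h₁' t) (Set.Ici 0) t)
    (hd2 : ∀ t ∈ Set.Ici (0:ℝ), HasDerivWithinAt h₂ (h₂' t) (Set.Ici 0) t)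
    (hd1' : ∀ t ∈ Set.Ici (0:ℝ), HasDerivWithinAt h₁' (h₁'' t) (Set.Ici 0) t)
    (hd2' : ∀ t ∈ Set.Ici (0:ℝ), HasDerivWithinAt h₂' (h₂'' t) (Set.Ici 0) t)
    (hineq : ∀ t ∈ Set.Ici (0:ℝ),
      Real.sqrt ((Real.exp (-γ * t) * (h₁'' t - γ * h₁' t)) ^ 2
          + (Real.exp (-γ * t) * (h₂'' t - γ * h₂' t)) ^ 2)
        ≤ C * Real.exp (-δ * t) * Real.sqrt (h₁ t ^ 2 + h₂ t ^ 2))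
    (hgrowth : ∀ t ∈ Set.Ici (0:ℝ),
      Real.sqrt (h₁ t ^ 2 + h₂ t ^ 2) ≤ C' * Real.exp (γ / 2 * t))
    (hlim1 : Filter.Tendsto (fun t => Real.exp (-γ * t) * h₁' t) Filter.atTop (nhds 0))
    (hlim2 : Filter.Tendsto (fun t => Real.exp (-γ * t) * h₂' t) Filter.atTop (nhds 0)) :
    (∃ c > (0:ℝ), ∃ A : ℝ, ∀ t ≥ (0:ℝ),
        Real.sqrt (h₁' t ^ 2 + h₂' t ^ 2) ≤ A * Real.exp (-c * t)) ∧
    (∃ L₁ L₂ : ℝ, Filter.Tendsto h₁ Filter.atTop (nhds L₁) ∧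
        Filter.Tendsto h₂ Filter.atTop (nhds L₂)) := by
  let h : ℝ → ℂ := fun t => ⟨h₁ t, h₂ t⟩
  let h' : ℝ → ℂ := fun t => ⟨h₁' t, h₂' t⟩
  let h'' : ℝ → ℂ := fun t => ⟨h₁'' t, h₂'' t⟩
  have hg : ∀ t ∈ Ici (0 : ℝ), HasDerivWithinAt (fun s => exp (-γ * s) • h' s)
      (exp (-γ * t) • (h'' t - γ • h' t)) (Ici 0) t := fun t ht =>
    (Complex.hasDerivWithinAt_mk (hd1' t ht) (hd2' t ht)).exp_neg_mul_smul γ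
  have hineq' : ∀ t ∈ Ici (0 : ℝ),
      ‖exp (-γ * t) • (h'' t - γ • h' t)‖ ≤ C * exp (-δ * t) * ‖h t‖ := fun t ht => by
    have : exp (-γ * t) • (h'' t - γ • h' t) =
        ⟨exp (-γ * t) * (h₁'' t - γ * h₁' t), exp (-γ * t) * (h₂'' t - γ * h₂' t)⟩ := by
      apply Complex.ext <;>
        simp only [Complex.smul_re, Complex.smul_im, Complex.sub_re, Complex.sub_im,
          smul_eq_mul] <;> rfl
    simpa only [this, h, Complex.norm_mk] using hineq t ht
  have hlim : Tendsto (fun t => exp (-γ * t) • h' t) atTop (𝓝 0) :=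
    (Complex.tendsto_mk hlim1 hlim2).congr fun t => (Complex.real_smul_mk _ _ _).symm
  obtain ⟨⟨c, hc, A, hA⟩, L, hL⟩ :=
    exists_decay_and_tendsto_of_norm_deriv_exp_smul_le hγ hδ hC.le
      (fun t ht => Complex.hasDerivWithinAt_mk (hd1 t ht) (hd2 t ht)) hg hineq'
      ⟨C', fun t ht => by simpa only [h, Complex.norm_mk] using hgrowth t ht⟩ hlim
  exact ⟨⟨c, hc, A, fun t ht => by simpa only [h', Complex.norm_mk] using hA t ht⟩,
    L.re, L.im, (Complex.continuous_re.tendsto L).comp hL,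
    (Complex.continuous_im.tendsto L).comp hL⟩

theorem stmt16 (γ δ C C' : ℝ) (hγ : 0 < γ) (hδ : γ < δ) (hC : 0 < C) (hC' : 0 < C')
    (h₁ h₂ h₁' h₂' h₁'' h₂'' : ℝ → ℝ)
    (hd1 : ∀ t ∈ Set.Ici (0:ℝ), HasDerivWithinAt h₁ (h₁' t) (Set.Ici 0) t)
    (hd2 : ∀ t ∈ Set.Ici (0:ℝ), HasDerivWithinAt h₂ (h₂' t) (Set.Ici 0) t)
    (hd1' : ∀ t ∈ Set.Ici (0:ℝ), HasDerivWithinAt h₁' (h₁'' t) (Set.Ici 0) t)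
    (hd2' : ∀ t ∈ Set.Ici (0:ℝ), HasDerivWithinAt h₂' (h₂'' t) (Set.Ici 0) t)
    (hcont1 : ContinuousOn h₁'' (Set.Ici 0)) (hcont2 : ContinuousOn h₂'' (Set.Ici 0))
    (hineq : ∀ t ∈ Set.Ici (0:ℝ),
      Real.sqrt ((Real.exp (-γ * t) * (h₁'' t - γ * h₁' t)) ^ 2
          + (Real.exp (-γ * t) * (h₂'' t - γ * h₂' t)) ^ 2)
        ≤ C * Real.exp (-δ * t) * Real.sqrt (h₁ t ^ 2 + h₂ t ^ 2))
    (hgrowth : ∀ t ∈ Set.Ici (0:ℝ),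
      Real.sqrt (h₁ t ^ 2 + h₂ t ^ 2) ≤ C' * Real.exp (γ / 2 * t))
    (hlim1 : Filter.Tendsto (fun t => Real.exp (-γ * t) * h₁' t) Filter.atTop (nhds 0))
    (hlim2 : Filter.Tendsto (fun t => Real.exp (-γ * t) * h₂' t) Filter.atTop (nhds 0)) :
    (∃ c > (0:ℝ), ∃ A : ℝ, ∀ t ≥ (0:ℝ),
        Real.sqrt (h₁' t ^ 2 + h₂' t ^ 2) ≤ A * Real.exp (-c * t)) ∧
    (∃ L₁ L₂ : ℝ, Filter.Tendsto h₁ Filter.atTop (nhds L₁) ∧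
        Filter.Tendsto h₂ Filter.atTop (nhds L₂)) :=
  stmt16_general γ δ C C' hγ hδ hC h₁ h₂ h₁' h₂' h₁'' h₂'' hd1 hd2 hd1' hd2' hineq hgrowth hlim1
    hlim2
end
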